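/- arXiv:0906.2547 — 7 statements merged into one kernel-verified Lean document; each statement's English description precedes it below -/
import Mathlib

section
/- If ρ_{AB} is the Choi matrix of a linear map E, then the Choi matrix of the composite map N = E* ∘ E is σ_{AA'} = Tr_B[(ρ_{AB} ⊗ I_{A'}) · (I_A ⊗ conj(ρ)_{BA'}^{T_B})], where conj(ρ)_{BA'} denotes the entrywise complex conjugate of ρ with its tensor factors swapped, and T_B is partial transpose on the B factor. -/
/-! Pairing with matrix units reads off the adjoint entrywise, `E*(Y)ᵢⱼ = conj ⟨Y, E(eᵢⱼ)⟩`.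
Hence the Choi entry `σ_{(a,a'),(c,c')} = E*(E(e_{ac}))_{a'c'}` is the Hilbert–Schmidt pairing
of `E(e_{ac})` with `E(e_{a'c'})`, i.e. a sum over `B` of products of entries of `ρ` and of
`conj ρ`, which is what the partial trace on the right-hand side spells out. -/

open Matrix
open scoped ComplexConjugate

/-- The (standard) Choi–Jamiołkowski matrix of a linear map
`E : M_{dA}(ℂ) → M_{dB}(ℂ)`; it satisfies `E(X) = Tr_A[ρ_{AB} · (Xᵀ ⊗ I)]`. -/
def choi {dA dB : ℕ} (E : Matrix (Fin dA) (Fin dA) ℂ →ₗ[ℂ] Matrix (Fin dB) (Fin dB) ℂ) :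
    Matrix (Fin dA × Fin dB) (Fin dA × Fin dB) ℂ :=
  Matrix.of fun p q => E (Matrix.single p.1 q.1 1) p.2 q.2

/-- `conj(ρ)_{BA'}`: the entrywise complex conjugate of `ρ_{AB}` with its two tensor
factors swapped. -/
def conjSwap {dA dB : ℕ} (ρ : Matrix (Fin dA × Fin dB) (Fin dA × Fin dB) ℂ) :
    Matrix (Fin dB × Fin dA) (Fin dB × Fin dA) ℂ :=
  Matrix.of fun p q => conj (ρ (p.2, p.1) (q.2, q.1))

/-- Partial transpose on the first (`B`) tensor factor of a matrix on `B ⊗ A'`. -/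
def ptFirst {dB dA : ℕ} (M : Matrix (Fin dB × Fin dA) (Fin dB × Fin dA) ℂ) :
    Matrix (Fin dB × Fin dA) (Fin dB × Fin dA) ℂ :=
  Matrix.of fun p q => M (q.1, p.2) (p.1, q.2)

/-- `Tr_B[(ρ_{AB} ⊗ I_{A'}) · (I_A ⊗ M_{BA'})]`, the partial trace over `B` of the
product of `ρ_{AB} ⊗ I_{A'}` and `I_A ⊗ M_{BA'}`, as a matrix on `A ⊗ A'`. -/
noncomputable def trBProd {dA dB : ℕ} (ρ : Matrix (Fin dA × Fin dB) (Fin dA × Fin dB) ℂ)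
    (M : Matrix (Fin dB × Fin dA) (Fin dB × Fin dA) ℂ) :
    Matrix (Fin dA × Fin dA) (Fin dA × Fin dA) ℂ :=
  Matrix.of fun p q => ∑ k, ∑ l, ρ (p.1, k) (q.1, l) * M (l, p.2) (k, q.2)

section Matrix

variable {m n R : Type*} [Fintype m] [Fintype n]

theorem trace_conjTranspose_mul_eq_sum [NonUnitalNonAssocSemiring R] [StarRing R]
    (A B : Matrix m n R) : (Aᴴ * B).trace = ∑ i, ∑ j, star (A i j) * B i j := by
  simp only [trace, diag_apply, mul_apply, conjTranspose_apply]
  exact Finset.sum_comm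

theorem trace_conjTranspose_mul_single_one [DecidableEq n] [NonAssocSemiring R] [StarRing R]
    (A : Matrix n n R) (i j : n) : (Aᴴ * single i j 1).trace = star (A i j) := by
  simp [trace_mul_single]

theorem apply_eq_star_trace_of_adjoint [DecidableEq m] [Semiring R] [StarRing R]
    {E : Matrix m m R → Matrix n n R} {F : Matrix n n R → Matrix m m R}
    (hadj : ∀ A B, (Aᴴ * E B).trace = ((F A)ᴴ * B).trace) (A : Matrix n n R) (i j : m) :
    F A i j = star (Aᴴ * E (single i j 1)).trace := by
  rw [hadj, trace_conjTranspose_mul_single_one, star_star]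

end Matrix

theorem choi_apply {dA dB : ℕ}
    (E : Matrix (Fin dA) (Fin dA) ℂ →ₗ[ℂ] Matrix (Fin dB) (Fin dB) ℂ) (p q : Fin dA × Fin dB) :
    choi E p q = E (single p.1 q.1 1) p.2 q.2 := rfl

theorem trBProd_ptFirst_conjSwap_apply {dA dB : ℕ}
    (ρ : Matrix (Fin dA × Fin dB) (Fin dA × Fin dB) ℂ) (p q : Fin dA × Fin dA) :
    trBProd ρ (ptFirst (conjSwap ρ)) p q
      = ∑ k, ∑ l, ρ (p.1, k) (q.1, l) * conj (ρ (p.2, k) (q.2, l)) := rfl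

/-- If `ρ_{AB}` is the Choi matrix of a linear map `E`, then the Choi matrix of the
composite `N = E* ∘ E` is `σ_{AA'} = Tr_B[(ρ_{AB} ⊗ I_{A'}) · (I_A ⊗ conj(ρ)_{BA'}^{T_B})]`. -/
theorem choi_comp_adjoint {dA dB : ℕ}
    (E : Matrix (Fin dA) (Fin dA) ℂ →ₗ[ℂ] Matrix (Fin dB) (Fin dB) ℂ)
    (Estar : Matrix (Fin dB) (Fin dB) ℂ →ₗ[ℂ] Matrix (Fin dA) (Fin dA) ℂ)
    (hadj : ∀ (A : Matrix (Fin dB) (Fin dB) ℂ) (B : Matrix (Fin dA) (Fin dA) ℂ),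
      (Aᴴ * E B).trace = ((Estar A)ᴴ * B).trace) :
    choi (Estar ∘ₗ E) = trBProd (choi E) (ptFirst (conjSwap (choi E))) := by
  ext ⟨a, a'⟩ ⟨c, c'⟩
  have hentry := apply_eq_star_trace_of_adjoint hadj (E (single a c 1)) a' c'
  rw [trBProd_ptFirst_conjSwap_apply, choi_apply, LinearMap.comp_apply, hentry,
    trace_conjTranspose_mul_eq_sum]
  simp only [star_sum, star_mul', Complex.star_def, Complex.conj_conj, choi_apply]
end

section
/- The Choi matrix σ_{AA'} of a conjugate-divisible map N = E* ∘ E (E a quantum channel) is invariant under the flip operation: Swap · conj(σ_{AA'}) · Swap = σ_{AA'}. -/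
/-!
Writing `e_ik` for the matrix units and `⟨X, Y⟩ = Tr (Xᴴ Y)`, the defining property of the adjoint
gives `σ_{(i,j),(k,l)} = (E* (E e_ik))_{jl} = conj ⟨E e_ik, E e_jl⟩`. The flip exchanges `(i,k)`
with `(j,l)` and conjugates, turning this into `⟨E e_jl, E e_ik⟩`, which is the same number by
Hermitian symmetry of `⟨·,·⟩`.
-/

open Matrix
open scoped ComplexConjugate ComplexOrder

/-- The flip operation `Flip(σ) = Swap · conj(σ) · Swap` on a matrix on
`ℂ^{d_A} ⊗ ℂ^{d_A}`. -/
def flipMat {dA : ℕ} (σ : Matrix (Fin dA × Fin dA) (Fin dA × Fin dA) ℂ) :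
    Matrix (Fin dA × Fin dA) (Fin dA × Fin dA) ℂ :=
  Matrix.of fun p q => conj (σ (p.2, p.1) (q.2, q.1))

section HilbertSchmidtAdjoint

variable {R m n : Type*} [CommSemiring R] [StarRing R] [Fintype m] [Fintype n]

theorem Matrix.star_trace_conjTranspose_mul (X Y : Matrix n n R) :
    star (trace (Xᴴ * Y)) = trace (Yᴴ * X) := by
  rw [← trace_conjTranspose, conjTranspose_mul, conjTranspose_conjTranspose]

theorem apply_eq_star_trace_of_isHilbertSchmidtAdjoint [DecidableEq n]
    (E : Matrix n n R →ₗ[R] Matrix m m R) (F : Matrix m m R →ₗ[R] Matrix n n R)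
    (hadj : ∀ A B, (Aᴴ * E B).trace = ((F A)ᴴ * B).trace) (A : Matrix m m R) (j l : n) :
    F A j l = star (trace (Aᴴ * E (single j l 1))) := by
  rw [hadj, trace_mul_single, MulOpposite.op_one, one_smul, conjTranspose_apply, star_star]

end HilbertSchmidtAdjoint

theorem flipMat_choi_comp_adjoint_general {dA dB : ℕ}
    (E : Matrix (Fin dA) (Fin dA) ℂ →ₗ[ℂ] Matrix (Fin dB) (Fin dB) ℂ)
    (Estar : Matrix (Fin dB) (Fin dB) ℂ →ₗ[ℂ] Matrix (Fin dA) (Fin dA) ℂ)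
    (hadj : ∀ (A : Matrix (Fin dB) (Fin dB) ℂ) (B : Matrix (Fin dA) (Fin dA) ℂ),
      (Aᴴ * E B).trace = ((Estar A)ᴴ * B).trace) :
    flipMat (choi (Estar ∘ₗ E)) = choi (Estar ∘ₗ E) := by
  ext ⟨i, j⟩ ⟨k, l⟩
  simp only [flipMat, choi, of_apply, LinearMap.comp_apply,
    apply_eq_star_trace_of_isHilbertSchmidtAdjoint E Estar hadj]
  exact congrArg star (star_trace_conjTranspose_mul _ _)

/-- The Choi matrix `σ_{AA'}` of a conjugate-divisible map `N = E* ∘ E` (`E` a quantum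
channel, i.e. completely positive and trace-preserving, with `E*` its
Hilbert–Schmidt adjoint) is invariant under the flip operation:
`Swap · conj(σ_{AA'}) · Swap = σ_{AA'}`. -/
theorem flipMat_choi_comp_adjoint {dA dB : ℕ}
    (E : Matrix (Fin dA) (Fin dA) ℂ →ₗ[ℂ] Matrix (Fin dB) (Fin dB) ℂ)
    (Estar : Matrix (Fin dB) (Fin dB) ℂ →ₗ[ℂ] Matrix (Fin dA) (Fin dA) ℂ)
    (hadj : ∀ (A : Matrix (Fin dB) (Fin dB) ℂ) (B : Matrix (Fin dA) (Fin dA) ℂ),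
      (Aᴴ * E B).trace = ((Estar A)ᴴ * B).trace)
    (hcp : (choi E).PosSemidef)
    (htp : ∀ X : Matrix (Fin dA) (Fin dA) ℂ, (E X).trace = X.trace) :
    flipMat (choi (Estar ∘ₗ E)) = choi (Estar ∘ₗ E) :=
  flipMat_choi_comp_adjoint_general E Estar hadj
end

section
/- Let σ_{AA'} be the Choi matrix of N = E* ∘ E for a CPT map E. Then the support of σ_{AA'} is a positive-semidefinite subspace: the corresponding matrix subspace M(supp(σ)) admits a spanning set consisting of positive-semidefinite matrices. -/
open Matrix
open scoped ComplexConjugate ComplexOrder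

/-- The coefficient-matrix isomorphism `ψ ↦ M(ψ)`, sending a vector
`ψ = Σ_{ij} M_{ij} e_i ⊗ e_j ∈ ℂ^{d_A} ⊗ ℂ^{d_A}` to its coefficient matrix. -/
def vecToMat {dA : ℕ} : ((Fin dA × Fin dA) → ℂ) →ₗ[ℂ] Matrix (Fin dA) (Fin dA) ℂ where
  toFun v := Matrix.of fun i j => v (i, j)
  map_add' _ _ := rfl
  map_smul' _ _ := rfl

/-!
Since `choi E` is positive semidefinite, `E` has Kraus operators `K a`, the trace duality then
forces `E*` to have Kraus operators `(K a)ᴴ`, and so `E* ∘ E` has Kraus operators `(K b)ᴴ * K a`.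
The support of the Choi matrix of a map with Kraus operators `L s` is spanned by the `L s`
(transposed, in the `vecToMat` convention), so `M(supp σ)` is spanned by the matrices
`(R a)ᴴ * R b` with `R a = (K a)ᴴᵀ`. By polarization each `(R a)ᴴ * R b` is a combination of the
positive semidefinite matrices `Zᴴ * Z` with `Z ∈ {R a, R b, R a + R b, R a + I • R b}`,
all of which lie in the same span.
-/

section PosSemidefSubspace

variable {m n κ : Type*} [Fintype m]

def IsPosSemidefSubspace [Fintype n] (S : Submodule ℂ (Matrix n n ℂ)) : Prop :=
  ∃ T : Set (Matrix n n ℂ), (∀ M ∈ T, M.PosSemidef) ∧ Submodule.span ℂ T = S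

theorem conjTranspose_add_smul_mul_self (X Y : Matrix m n ℂ) (c : ℂ) :
    (X + c • Y)ᴴ * (X + c • Y) =
      Xᴴ * X + c • (Xᴴ * Y) + star c • (Yᴴ * X) + (star c * c) • (Yᴴ * Y) := by
  simp only [conjTranspose_add, conjTranspose_smul, Matrix.add_mul, Matrix.mul_add,
    Matrix.smul_mul, Matrix.mul_smul]
  module

theorem conjTranspose_mul_eq_polarization (X Y : Matrix m n ℂ) :
    Xᴴ * Y = (2⁻¹ : ℂ) • ((X + (1 : ℂ) • Y)ᴴ * (X + (1 : ℂ) • Y) - Xᴴ * X - Yᴴ * Y) -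
      (Complex.I / 2) • ((X + Complex.I • Y)ᴴ * (X + Complex.I • Y) - Xᴴ * X - Yᴴ * Y) := by
  rw [conjTranspose_add_smul_mul_self, conjTranspose_add_smul_mul_self]
  match_scalars <;> norm_num [Complex.ext_iff]

theorem isPosSemidefSubspace_span_conjTranspose_mul [Fintype n] (R : κ → Matrix m n ℂ) :
    IsPosSemidefSubspace (Submodule.span ℂ (Set.range fun p : κ × κ => (R p.1)ᴴ * R p.2)) := by
  set S := Submodule.span ℂ (Set.range fun p : κ × κ => (R p.1)ᴴ * R p.2)
  set P := Submodule.span ℂ {M | M ∈ S ∧ M.PosSemidef}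
  refine ⟨{M | M ∈ S ∧ M.PosSemidef}, fun M hM => hM.2,
    le_antisymm (Submodule.span_le.mpr fun M hM => hM.1) ?_⟩
  have hS : ∀ a b, (R a)ᴴ * R b ∈ S := fun a b => Submodule.subset_span ⟨(a, b), rfl⟩
  have hself : ∀ a, (R a)ᴴ * R a ∈ P :=
    fun a => Submodule.subset_span ⟨hS a a, posSemidef_conjTranspose_mul_self _⟩
  have hcomb : ∀ a b (c : ℂ), (R a + c • R b)ᴴ * (R a + c • R b) ∈ P := by
    intro a b c
    refine Submodule.subset_span ⟨?_, posSemidef_conjTranspose_mul_self _⟩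
    rw [conjTranspose_add_smul_mul_self]
    exact add_mem (add_mem (add_mem (hS a a) (Submodule.smul_mem _ _ (hS a b)))
      (Submodule.smul_mem _ _ (hS b a))) (Submodule.smul_mem _ _ (hS b b))
  refine Submodule.span_le.mpr ?_
  rintro _ ⟨⟨a, b⟩, rfl⟩
  change (R a)ᴴ * R b ∈ P
  rw [conjTranspose_mul_eq_polarization]
  exact sub_mem (Submodule.smul_mem _ _ (sub_mem (sub_mem (hcomb a b 1) (hself a)) (hself b)))
    (Submodule.smul_mem _ _ (sub_mem (sub_mem (hcomb a b _) (hself a)) (hself b)))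

end PosSemidefSubspace

theorem Matrix.range_mulVecLin_mul_conjTranspose {m n : Type*} [Fintype m] [Fintype n]
    (A : Matrix m n ℂ) : LinearMap.range (A * Aᴴ).mulVecLin = LinearMap.range A.mulVecLin := by
  refine Submodule.eq_of_le_of_finrank_eq ?_ (rank_self_mul_conjTranspose A)
  rw [mulVecLin_mul]
  exact LinearMap.range_comp_le_range _ _

theorem eq_sum_conjTranspose_mul_mul_of_trace_adjoint {m n ι : Type*} [Fintype m] [Fintype n]
    [Fintype ι] (K : ι → Matrix m n ℂ) {E : Matrix n n ℂ → Matrix m m ℂ}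
    {Estar : Matrix m m ℂ → Matrix n n ℂ} (hE : ∀ X, E X = ∑ s, K s * X * (K s)ᴴ)
    (hadj : ∀ A X, (Aᴴ * E X).trace = ((Estar A)ᴴ * X).trace) (A : Matrix m m ℂ) :
    Estar A = ∑ s, (K s)ᴴ * A * K s := by
  set D := Estar A - ∑ s, (K s)ᴴ * A * K s
  have hD : ∀ X, (Dᴴ * X).trace = 0 := by
    intro X
    have hterm : ∀ s, (((K s)ᴴ * A * K s)ᴴ * X).trace = (Aᴴ * (K s * X * (K s)ᴴ)).trace := by
      intro s
      simp only [conjTranspose_mul, conjTranspose_conjTranspose, Matrix.mul_assoc]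
      rw [trace_mul_comm, Matrix.mul_assoc, Matrix.mul_assoc]
    simp only [D, conjTranspose_sub, conjTranspose_sum, Matrix.sub_mul, Finset.sum_mul, trace_sub,
      trace_sum, hterm]
    rw [← trace_sum, ← Matrix.mul_sum, ← hE, hadj, sub_self]
  exact sub_eq_zero.mp (trace_conjTranspose_mul_self_eq_zero_iff.mp (hD D))

theorem exists_kraus_of_posSemidef_choi {dA dB : ℕ}
    {E : Matrix (Fin dA) (Fin dA) ℂ →ₗ[ℂ] Matrix (Fin dB) (Fin dB) ℂ} (hE : (choi E).PosSemidef) :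
    ∃ K : Fin dA × Fin dB → Matrix (Fin dB) (Fin dA) ℂ, ∀ X, E X = ∑ a, K a * X * (K a)ᴴ := by
  open scoped MatrixOrder in
  obtain ⟨B, hB⟩ := CStarAlgebra.nonneg_iff_eq_star_mul_self.mp hE.nonneg
  refine ⟨fun a => Matrix.of fun p i => conj (B a (i, p)), fun X => ?_⟩
  induction X using Matrix.induction_on' with
  | h_zero => simp
  | h_add X Y hX hY =>
    simp only [map_add, hX, hY, Matrix.add_mul, Matrix.mul_add, Finset.sum_add_distrib]
  | h_std_basis i j x =>
    ext p q
    have hEij : E (single i j x) p q = x * choi E (i, p) (j, q) := by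
      rw [show single i j x = x • single i j 1 by rw [smul_single, smul_eq_mul, mul_one],
        map_smul]
      rfl
    rw [hEij, hB]
    simp [mul_apply, Matrix.sum_apply, single_apply, ite_and, Finset.mul_sum, mul_comm,
      mul_left_comm]

theorem choi_eq_mul_conjTranspose_of_kraus {dA dB : ℕ} {κ : Type*} [Fintype κ]
    {N : Matrix (Fin dA) (Fin dA) ℂ →ₗ[ℂ] Matrix (Fin dB) (Fin dB) ℂ}
    (L : κ → Matrix (Fin dB) (Fin dA) ℂ) (hN : ∀ X, N X = ∑ s, L s * X * (L s)ᴴ) :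
    choi N = (Matrix.of fun x s => L s x.2 x.1) * (Matrix.of fun x s => L s x.2 x.1)ᴴ := by
  ext ⟨i, p⟩ ⟨j, q⟩
  simp [choi, hN, mul_apply, Matrix.sum_apply, single_apply, ite_and]

theorem map_vecToMat_range_choi_of_kraus {dA : ℕ} {κ : Type*} [Fintype κ]
    {N : Matrix (Fin dA) (Fin dA) ℂ →ₗ[ℂ] Matrix (Fin dA) (Fin dA) ℂ}
    (L : κ → Matrix (Fin dA) (Fin dA) ℂ) (hN : ∀ X, N X = ∑ s, L s * X * (L s)ᴴ) :
    Submodule.map vecToMat (LinearMap.range (choi N).mulVecLin) =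
      Submodule.span ℂ (Set.range fun s => (L s)ᵀ) := by
  rw [choi_eq_mul_conjTranspose_of_kraus L hN, range_mulVecLin_mul_conjTranspose,
    range_mulVecLin, Submodule.map_span, ← Set.range_comp]
  rfl

theorem choi_comp_adjoint_support_posSemidef_general {dA dB : ℕ}
    (E : Matrix (Fin dA) (Fin dA) ℂ →ₗ[ℂ] Matrix (Fin dB) (Fin dB) ℂ)
    (Estar : Matrix (Fin dB) (Fin dB) ℂ →ₗ[ℂ] Matrix (Fin dA) (Fin dA) ℂ)
    (hadj : ∀ (A : Matrix (Fin dB) (Fin dB) ℂ) (B : Matrix (Fin dA) (Fin dA) ℂ),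
      (Aᴴ * E B).trace = ((Estar A)ᴴ * B).trace)
    (hcp : (choi E).PosSemidef) :
    ∃ T : Set (Matrix (Fin dA) (Fin dA) ℂ),
      (∀ M ∈ T, M.PosSemidef) ∧
      Submodule.span ℂ T =
        Submodule.map vecToMat (LinearMap.range (choi (Estar ∘ₗ E)).mulVecLin) := by
  obtain ⟨K, hK⟩ := exists_kraus_of_posSemidef_choi hcp
  have hKstar := eq_sum_conjTranspose_mul_mul_of_trace_adjoint K hK hadj
  have hN : ∀ X, (Estar ∘ₗ E) X =
      ∑ p : (Fin dA × Fin dB) × (Fin dA × Fin dB),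
        ((K p.2)ᴴ * K p.1) * X * ((K p.2)ᴴ * K p.1)ᴴ := by
    intro X
    rw [LinearMap.comp_apply, hKstar, hK]
    conv_rhs => rw [Fintype.sum_prod_type_right]
    simp only [Matrix.mul_sum, Matrix.sum_mul, conjTranspose_mul, conjTranspose_conjTranspose,
      Matrix.mul_assoc]
  have hL : ∀ p : (Fin dA × Fin dB) × (Fin dA × Fin dB),
      ((K p.2)ᴴ * K p.1)ᵀ = (K p.1)ᴴᵀᴴ * (K p.2)ᴴᵀ := fun p => by
    rw [transpose_mul, ← conjTranspose_transpose_eq_transpose_conjTranspose (K p.1),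
      conjTranspose_conjTranspose]
  rw [map_vecToMat_range_choi_of_kraus _ hN]
  simp only [hL]
  exact isPosSemidefSubspace_span_conjTranspose_mul fun a => (K a)ᴴᵀ

/-- Let `σ_{AA'}` be the Choi matrix of `N = E* ∘ E` for a CPT map `E`. Then the support
of `σ_{AA'}` is a positive-semidefinite subspace: the corresponding matrix subspace
`M(supp σ)` admits a spanning set of positive-semidefinite matrices. -/
theorem choi_comp_adjoint_support_posSemidef {dA dB : ℕ}
    (E : Matrix (Fin dA) (Fin dA) ℂ →ₗ[ℂ] Matrix (Fin dB) (Fin dB) ℂ)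
    (Estar : Matrix (Fin dB) (Fin dB) ℂ →ₗ[ℂ] Matrix (Fin dA) (Fin dA) ℂ)
    (hadj : ∀ (A : Matrix (Fin dB) (Fin dB) ℂ) (B : Matrix (Fin dA) (Fin dA) ℂ),
      (Aᴴ * E B).trace = ((Estar A)ᴴ * B).trace)
    (hcp : (choi E).PosSemidef)
    (htp : ∀ X : Matrix (Fin dA) (Fin dA) ℂ, (E X).trace = X.trace) :
    ∃ T : Set (Matrix (Fin dA) (Fin dA) ℂ),
      (∀ M ∈ T, M.PosSemidef) ∧
      Submodule.span ℂ T =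
        Submodule.map vecToMat (LinearMap.range (choi (Estar ∘ₗ E)).mulVecLin) :=
  choi_comp_adjoint_support_posSemidef_general E Estar hadj hcp
end

section
/- Let {|ψ_i^k⟩}_{i,k} be finitely many vectors in ℂ^d. The matrix subspace spanned by the matrices M_{kl} = Σ_i |ψ_i^k⟩⟨ψ_i^l| (over all pairs k,l) admits a basis of positive-semidefinite matrices. Specifically, for sufficiently large c > 0, the matrices Σ_i(|ψ_i^k⟩⟨ψ_i^l| + |ψ_i^l⟩⟨ψ_i^k|) + c·Σ_{i,k}|ψ_i^k⟩⟨ψ_i^k| and Σ_i i(|ψ_i^k⟩⟨ψ_i^l| − |ψ_i^l⟩⟨ψ_i^k|) + c·Σ_{i,k}|ψ_i^k⟩⟨ψ_i^k| are positive semidefinite and span this subspace. -/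
/-!
With `P k = Σ_i |ψ_i^k⟩⟨ψ_i^k|` and `D = Σ_k P k`, the expansions of `|a + b⟩⟨a + b|` and
`|a - i b⟩⟨a - i b|` show that the symmetric and antisymmetric combinations become positive
semidefinite once `P k + P l` is added, and `c D - P k - P l` is positive semidefinite for `c ≥ 2`.
For the span, the symmetric generators with `k = l` add up to `(2 + |κ| c) D`, so `D` lies in the
span; removing `c D` leaves the symmetric and antisymmetric parts of `M k l`, hence `M k l` itself.
-/

open Matrix
open scoped ComplexOrder

variable {n : Type*}

theorem vecMulVec_add_star_add {R : Type*} [CommRing R] [StarRing R] (a b : n → R) :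
    vecMulVec (a + b) (star (a + b)) =
      vecMulVec a (star a) + (vecMulVec a (star b) + vecMulVec b (star a))
        + vecMulVec b (star b) := by
  simp only [star_add, vecMulVec_add, add_vecMulVec]; abel

theorem vecMulVec_sub_I_smul_star (a b : n → ℂ) :
    vecMulVec (a - Complex.I • b) (star (a - Complex.I • b)) =
      vecMulVec a (star a) + Complex.I • (vecMulVec a (star b) - vecMulVec b (star a))
        + vecMulVec b (star b) := by
  ext i j
  simp only [vecMulVec_apply, star_sub, star_smul, Complex.star_def, Complex.conj_I,
    Pi.sub_apply, Pi.smul_apply, Pi.star_apply, Matrix.add_apply, Matrix.sub_apply,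
    Matrix.smul_apply, smul_eq_mul]
  linear_combination -b i * (starRingEnd ℂ) (b j) * Complex.I_mul_I

theorem posSemidef_sum_vecMulVec_add_swap [Finite n] {ι : Type*} [Fintype ι] (a b : ι → n → ℂ) :
    (∑ i, (vecMulVec (a i) (star (b i)) + vecMulVec (b i) (star (a i)))
      + ∑ i, vecMulVec (a i) (star (a i)) + ∑ i, vecMulVec (b i) (star (b i))).PosSemidef := by
  have : ∑ i, (vecMulVec (a i) (star (b i)) + vecMulVec (b i) (star (a i)))
      + ∑ i, vecMulVec (a i) (star (a i)) + ∑ i, vecMulVec (b i) (star (b i))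
      = ∑ i, vecMulVec (a i + b i) (star (a i + b i)) := by
    simp only [vecMulVec_add_star_add, Finset.sum_add_distrib]; abel
  rw [this]
  exact posSemidef_sum _ fun i _ => posSemidef_vecMulVec_self_star _

theorem posSemidef_sum_I_smul_vecMulVec_sub_swap [Finite n] {ι : Type*} [Fintype ι]
    (a b : ι → n → ℂ) :
    (∑ i, Complex.I • (vecMulVec (a i) (star (b i)) - vecMulVec (b i) (star (a i)))
      + ∑ i, vecMulVec (a i) (star (a i)) + ∑ i, vecMulVec (b i) (star (b i))).PosSemidef := by
  have : ∑ i, Complex.I • (vecMulVec (a i) (star (b i)) - vecMulVec (b i) (star (a i)))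
      + ∑ i, vecMulVec (a i) (star (a i)) + ∑ i, vecMulVec (b i) (star (b i))
      = ∑ i, vecMulVec (a i - Complex.I • b i) (star (a i - Complex.I • b i)) := by
    simp only [vecMulVec_sub_I_smul_star, Finset.sum_add_distrib]; abel
  rw [this]
  exact posSemidef_sum _ fun i _ => posSemidef_vecMulVec_self_star _

theorem posSemidef_add_smul_sum {κ : Type*} [Fintype κ] [DecidableEq κ] {A : Matrix n n ℂ}
    {P : κ → Matrix n n ℂ} (hP : ∀ k, (P k).PosSemidef) {k l : κ}
    (hA : (A + P k + P l).PosSemidef) {c : ℝ} (hc : 2 ≤ c) :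
    (A + (c : ℂ) • ∑ k', P k').PosSemidef := by
  have hrest (j : κ) : (∑ k', P k' - P j).PosSemidef := by
    rw [← Finset.add_sum_erase _ _ (Finset.mem_univ j), add_sub_cancel_left]
    exact posSemidef_sum _ fun k' _ => hP k'
  have hc2 : (0 : ℂ) ≤ ((c - 2 : ℝ) : ℂ) := Complex.zero_le_real.mpr (by linarith)
  have : A + (c : ℂ) • ∑ k', P k' =
      (A + P k + P l)
        + (((c - 2 : ℝ) : ℂ) • ∑ k', P k' + (∑ k', P k' - P k) + (∑ k', P k' - P l)) := by
    push_cast; module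
  rw [this]
  exact hA.add (((posSemidef_sum _ fun k' _ => hP k').smul hc2).add (hrest k) |>.add (hrest l))

theorem span_sym_union_antisym_add_smul_diag_eq {V : Type*} [AddCommGroup V] [Module ℂ V]
    {κ : Type*} [Fintype κ] (M : κ → κ → V) {c : ℂ} (hc : 2 + Fintype.card κ * c ≠ 0) :
    Submodule.span ℂ (Set.range (fun p : κ × κ => M p.1 p.2 + M p.2 p.1 + c • ∑ k, M k k) ∪
      Set.range (fun p : κ × κ => Complex.I • (M p.1 p.2 - M p.2 p.1) + c • ∑ k, M k k))
    = Submodule.span ℂ (Set.range fun p : κ × κ => M p.1 p.2) := by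
  set D := ∑ k, M k k
  set S := Submodule.span ℂ (Set.range (fun p : κ × κ => M p.1 p.2 + M p.2 p.1 + c • D) ∪
      Set.range (fun p : κ × κ => Complex.I • (M p.1 p.2 - M p.2 p.1) + c • D))
  have hsymm (k l : κ) : M k l + M l k + c • D ∈ S :=
    Submodule.subset_span (Or.inl ⟨(k, l), rfl⟩)
  have hanti (k l : κ) : Complex.I • (M k l - M l k) + c • D ∈ S :=
    Submodule.subset_span (Or.inr ⟨(k, l), rfl⟩)
  apply le_antisymm
  · have hM (k l : κ) : M k l ∈ Submodule.span ℂ (Set.range fun p : κ × κ => M p.1 p.2) :=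
      Submodule.subset_span ⟨(k, l), rfl⟩
    have hD : D ∈ Submodule.span ℂ (Set.range fun p : κ × κ => M p.1 p.2) :=
      Submodule.sum_mem _ fun k _ => hM k k
    rw [Submodule.span_le, Set.union_subset_iff]
    constructor <;> rintro _ ⟨p, rfl⟩
    · exact add_mem (add_mem (hM _ _) (hM _ _)) (Submodule.smul_mem _ c hD)
    · exact add_mem (Submodule.smul_mem _ _ (sub_mem (hM _ _) (hM _ _)))
        (Submodule.smul_mem _ c hD)
  · have hD : D ∈ S := by
      have : D = (2 + Fintype.card κ * c)⁻¹ • ∑ k, (M k k + M k k + c • D) := by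
        rw [Finset.sum_add_distrib, Finset.sum_add_distrib, Finset.sum_const, Finset.card_univ,
          ← Nat.cast_smul_eq_nsmul ℂ, smul_smul, ← two_smul ℂ D, ← add_smul, smul_smul,
          inv_mul_cancel₀ hc, one_smul]
      rw [this]
      exact Submodule.smul_mem _ _ (Submodule.sum_mem _ fun k _ => hsymm k k)
    rw [Submodule.span_le]
    rintro _ ⟨⟨k, l⟩, rfl⟩
    have h1 : M k l + M l k ∈ S := by
      simpa using sub_mem (hsymm k l) (Submodule.smul_mem S c hD)
    have h2 : Complex.I • (M k l - M l k) ∈ S := by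
      simpa using sub_mem (hanti k l) (Submodule.smul_mem S c hD)
    have : M k l = (2⁻¹ : ℂ) • ((M k l + M l k) - Complex.I • Complex.I • (M k l - M l k)) := by
      rw [smul_smul, Complex.I_mul_I]; module
    rw [show (fun p : κ × κ => M p.1 p.2) (k, l) = M k l from rfl, this]
    exact Submodule.smul_mem _ _ (sub_mem h1 (Submodule.smul_mem _ _ h2))

/-- Let `{|ψ_i^k⟩}` be finitely many vectors in `ℂ^d`. The matrix subspace spanned by
the matrices `M_{kl} = Σ_i |ψ_i^k⟩⟨ψ_i^l|` admits a basis of positive-semidefinite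
matrices: for sufficiently large `c > 0`, the matrices
`Σ_i(|ψ_i^k⟩⟨ψ_i^l| + |ψ_i^l⟩⟨ψ_i^k|) + c·D` and
`Σ_i i(|ψ_i^k⟩⟨ψ_i^l| − |ψ_i^l⟩⟨ψ_i^k|) + c·D`, where `D = Σ_{i,k}|ψ_i^k⟩⟨ψ_i^k|`,
are positive semidefinite and span this subspace. -/
theorem posSemidef_spanning_set {d : ℕ} {ι κ : Type} [Fintype ι] [Fintype κ]
    (ψ : ι → κ → (Fin d → ℂ)) :
    ∃ c₀ : ℝ, 0 < c₀ ∧ ∀ c : ℝ, c₀ ≤ c →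
      (∀ k l : κ,
        (∑ i, (vecMulVec (ψ i k) (star (ψ i l)) + vecMulVec (ψ i l) (star (ψ i k)))
          + (c : ℂ) • ∑ i, ∑ k', vecMulVec (ψ i k') (star (ψ i k'))).PosSemidef ∧
        (∑ i, Complex.I • (vecMulVec (ψ i k) (star (ψ i l)) - vecMulVec (ψ i l) (star (ψ i k)))
          + (c : ℂ) • ∑ i, ∑ k', vecMulVec (ψ i k') (star (ψ i k'))).PosSemidef) ∧
      Submodule.span ℂ
        (Set.range (fun p : κ × κ =>
          ∑ i, (vecMulVec (ψ i p.1) (star (ψ i p.2)) + vecMulVec (ψ i p.2) (star (ψ i p.1)))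
            + (c : ℂ) • ∑ i, ∑ k', vecMulVec (ψ i k') (star (ψ i k'))) ∪
         Set.range (fun p : κ × κ =>
          ∑ i, Complex.I • (vecMulVec (ψ i p.1) (star (ψ i p.2))
              - vecMulVec (ψ i p.2) (star (ψ i p.1)))
            + (c : ℂ) • ∑ i, ∑ k', vecMulVec (ψ i k') (star (ψ i k'))))
      = Submodule.span ℂ
          (Set.range fun p : κ × κ => ∑ i, vecMulVec (ψ i p.1) (star (ψ i p.2))) := by
  classical
  have hP (k : κ) : (∑ i, vecMulVec (ψ i k) (star (ψ i k))).PosSemidef :=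
    posSemidef_sum _ fun i _ => posSemidef_vecMulVec_self_star _
  refine ⟨2, two_pos, fun c hc => ⟨fun k l => ⟨?_, ?_⟩, ?_⟩⟩
  · rw [Finset.sum_comm]
    exact posSemidef_add_smul_sum hP (posSemidef_sum_vecMulVec_add_swap _ _) hc
  · rw [Finset.sum_comm]
    exact posSemidef_add_smul_sum hP (posSemidef_sum_I_smul_vecMulVec_sub_swap _ _) hc
  · simp only [Finset.sum_add_distrib, ← Finset.smul_sum, Finset.sum_sub_distrib]
    rw [Finset.sum_comm]
    refine span_sym_union_antisym_add_smul_diag_eq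
      (fun k l => ∑ i, vecMulVec (ψ i k) (star (ψ i l))) ?_
    exact_mod_cast (by positivity : (0 : ℝ) < 2 + Fintype.card κ * c).ne'
end

section
/- Let X be the d × d antidiagonal permutation matrix (X_{i,j} = 1 iff i + j = d + 1). Define F₁(S) = S + Flip(S) and F₂(S) = S + (I ⊗ X)·Flip((I ⊗ X)·S) for subspaces S ⊆ ℂ^d ⊗ ℂ^d. Then alternately iterating F₁ and F₂ starting from any subspace S converges after finitely many steps to a subspace F(S) satisfying Flip(F(S)) = F(S) and Flip((I⊗X)·F(S)) = (I⊗X)·F(S), and dim F(S) ≤ 4 · dim S. -/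
open scoped ComplexConjugate

noncomputable section

/-- The flip operation on `ℂ^d ⊗ ℂ^d` as a conjugate-linear (star-semilinear) map:
under the coefficient-matrix isomorphism it acts as `M ↦ M†`. -/
def flipL (d : ℕ) : ((Fin d × Fin d) → ℂ) →ₛₗ[starRingEnd ℂ] ((Fin d × Fin d) → ℂ) where
  toFun v := fun p => conj (v (p.2, p.1))
  map_add' u v := by funext p; simp
  map_smul' c v := by funext p; simp [mul_comm]

instance : RingHomSurjective (starRingEnd ℂ) :=
  ⟨fun x => ⟨conj x, by simp⟩⟩

/-- The action of `I ⊗ X` on `ℂ^d ⊗ ℂ^d`, where `X` is the antidiagonal permutation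
matrix (`X_{i,j} = 1` iff `i + j = d + 1`): `((I⊗X)v)(i,j) = v(i, rev j)`. -/
def mapIX (d : ℕ) : ((Fin d × Fin d) → ℂ) →ₗ[ℂ] ((Fin d × Fin d) → ℂ) :=
  LinearMap.funLeft ℂ ℂ fun p => (p.1, p.2.rev)

/-- `F₁(S) = S + Flip(S)`. -/
def F₁ {d : ℕ} (S : Submodule ℂ ((Fin d × Fin d) → ℂ)) :
    Submodule ℂ ((Fin d × Fin d) → ℂ) :=
  S ⊔ Submodule.map (flipL d) S

/-- `F₂(S) = S + (I⊗X)·Flip((I⊗X)·S)`. -/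
def F₂ {d : ℕ} (S : Submodule ℂ ((Fin d × Fin d) → ℂ)) :
    Submodule ℂ ((Fin d × Fin d) → ℂ) :=
  S ⊔ Submodule.map (mapIX d) (Submodule.map (flipL d) (Submodule.map (mapIX d) S))

/-!
`Flip` and the twisted flip `S ↦ X·Flip(X·S)` are commuting involutions of the lattice of
subspaces that preserve sums. Hence `F₁ S = S + Flip S` is `Flip`-invariant, and
`F₂ (F₁ S) = F₁ S + X·Flip(X·F₁ S)` is invariant under both involutions, so a single round of
`F₂ ∘ F₁` already reaches the fixed point. Each of `F₁`, `F₂` at most doubles the dimension.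
-/

open Function Module

section Involutions

variable {α : Type*} [SemilatticeSup α] {φ ψ : α → α}

theorem apply_sup_apply_self_of_involutive (hφ : ∀ a b, φ (a ⊔ b) = φ a ⊔ φ b)
    (hφφ : Involutive φ) (a : α) : φ (a ⊔ φ a) = a ⊔ φ a := by
  rw [hφ, hφφ, sup_comm]

theorem apply_sup_apply_of_commute (hφ : ∀ a b, φ (a ⊔ b) = φ a ⊔ φ b)
    (hφψ : Function.Commute φ ψ) {b : α} (hb : φ b = b) : φ (b ⊔ ψ b) = b ⊔ ψ b := by
  rw [hφ, hφψ b, hb]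

end Involutions

theorem iterate_eq_apply_of_one_le {α : Type*} {f : α → α} {a : α} (h : f (f a) = f a) {m : ℕ}
    (hm : 1 ≤ m) : f^[m] a = f a := by
  obtain ⟨k, rfl⟩ := Nat.exists_eq_add_of_le' hm
  rw [iterate_succ_apply, iterate_fixed h]

namespace Submodule

variable {K K₂ V V₂ : Type*} [DivisionRing K] [DivisionRing K₂] [AddCommGroup V] [Module K V]
  [AddCommGroup V₂] [Module K₂ V₂]

theorem finrank_map_semilinear_le {σ : K →+* K₂} [RingHomSurjective σ] (f : V →ₛₗ[σ] V₂)
    (p : Submodule K V) [FiniteDimensional K p] : finrank K₂ (p.map f) ≤ finrank K p := by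
  let b := Module.finBasis K p
  have hspan : p.map f = span K₂ (Set.range (f ∘ p.subtype ∘ b)) := by
    rw [Set.range_comp, Set.range_comp, ← map_span, ← map_span, b.span_eq, map_top, range_subtype]
  rw [hspan]
  exact (finrank_range_le_card _).trans (by simp)

theorem finrank_sup_le_two_mul [FiniteDimensional K V] {p q : Submodule K V}
    (h : finrank K q ≤ finrank K p) : finrank K ↥(p ⊔ q) ≤ 2 * finrank K p :=
  (finrank_add_le_finrank_add_finrank p q).trans (by omega)

theorem map_map_eq_self {σ : K →+* K₂} {σ' : K₂ →+* K} [RingHomSurjective σ]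
    [RingHomSurjective σ'] {f : V →ₛₗ[σ] V₂} {g : V₂ →ₛₗ[σ'] V} (h : LeftInverse g f)
    (p : Submodule K V) : (p.map f).map g = p :=
  SetLike.coe_injective <| by simp only [map_coe, h.image_image]

end Submodule

section Symmetrisation

variable {d : ℕ}

@[simp] theorem flipL_apply (v : (Fin d × Fin d) → ℂ) (p : Fin d × Fin d) :
    flipL d v p = conj (v (p.2, p.1)) := rfl

@[simp] theorem mapIX_apply (v : (Fin d × Fin d) → ℂ) (p : Fin d × Fin d) :
    mapIX d v p = v (p.1, p.2.rev) := rfl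

theorem flipL_involutive : Involutive (flipL d) := fun v => by ext; simp

theorem mapIX_involutive : Involutive (mapIX d) := fun v => by ext; simp

theorem flipL_comm_mapIX_flipL_mapIX (v : (Fin d × Fin d) → ℂ) :
    flipL d (mapIX d (flipL d (mapIX d v))) = mapIX d (flipL d (mapIX d (flipL d v))) := by
  ext; simp

/-- The second symmetry `M ↦ X M† X`, acting on subspaces. -/
def flipX (S : Submodule ℂ ((Fin d × Fin d) → ℂ)) : Submodule ℂ ((Fin d × Fin d) → ℂ) :=
  ((S.map (mapIX d)).map (flipL d)).map (mapIX d)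

theorem F₂_eq (S : Submodule ℂ ((Fin d × Fin d) → ℂ)) : F₂ S = S ⊔ flipX S := rfl

theorem map_flipL_involutive : Involutive (Submodule.map (flipL d)) :=
  Submodule.map_map_eq_self flipL_involutive

theorem flipX_involutive : Involutive (flipX (d := d)) := fun S => by
  simp only [flipX, Submodule.map_map_eq_self mapIX_involutive,
    Submodule.map_map_eq_self flipL_involutive]

theorem flipX_sup (S T : Submodule ℂ ((Fin d × Fin d) → ℂ)) :
    flipX (S ⊔ T) = flipX S ⊔ flipX T := by
  simp only [flipX, Submodule.map_sup]

theorem commute_map_flipL_flipX : Function.Commute (Submodule.map (flipL d)) flipX := fun S =>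
  SetLike.coe_injective <| by
    simp only [flipX, Submodule.map_coe, Set.image_image, flipL_comm_mapIX_flipL_mapIX]

theorem finrank_flipX_le (S : Submodule ℂ ((Fin d × Fin d) → ℂ)) :
    finrank ℂ (flipX S) ≤ finrank ℂ S :=
  calc finrank ℂ (flipX S)
      ≤ finrank ℂ ((S.map (mapIX d)).map (flipL d)) := Submodule.finrank_map_le _ _
    _ ≤ finrank ℂ (S.map (mapIX d)) := Submodule.finrank_map_semilinear_le _ _
    _ ≤ finrank ℂ S := Submodule.finrank_map_le _ _

variable (S : Submodule ℂ ((Fin d × Fin d) → ℂ))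

theorem map_flipL_F₁ : (F₁ S).map (flipL d) = F₁ S :=
  apply_sup_apply_self_of_involutive (Submodule.map_sup · · _) map_flipL_involutive S

theorem map_flipL_F₂_F₁ : (F₂ (F₁ S)).map (flipL d) = F₂ (F₁ S) :=
  apply_sup_apply_of_commute (Submodule.map_sup · · _) commute_map_flipL_flipX (map_flipL_F₁ S)

theorem flipX_F₂_F₁ : flipX (F₂ (F₁ S)) = F₂ (F₁ S) :=
  apply_sup_apply_self_of_involutive flipX_sup flipX_involutive (F₁ S)

theorem F₂_F₁_F₂_F₁ : F₂ (F₁ (F₂ (F₁ S))) = F₂ (F₁ S) := by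
  rw [F₁, map_flipL_F₂_F₁, sup_idem, F₂_eq, flipX_F₂_F₁, sup_idem]

theorem finrank_F₂_F₁_le : finrank ℂ (F₂ (F₁ S)) ≤ 4 * finrank ℂ S := by
  have h₁ : finrank ℂ (F₁ S) ≤ 2 * finrank ℂ S :=
    Submodule.finrank_sup_le_two_mul (Submodule.finrank_map_semilinear_le _ S)
  have h₂ : finrank ℂ (F₂ (F₁ S)) ≤ 2 * finrank ℂ (F₁ S) :=
    Submodule.finrank_sup_le_two_mul (finrank_flipX_le _)
  omega

end Symmetrisation

/-- Alternately iterating `F₁` and `F₂` from any subspace `S ⊆ ℂ^d ⊗ ℂ^d` converges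
after finitely many steps to a subspace `F(S)` which is invariant under `Flip` and
under the `(I⊗X)`-conjugated flip, and `dim F(S) ≤ 4 · dim S`. -/
theorem symmetrisation_converges {d : ℕ} (S : Submodule ℂ ((Fin d × Fin d) → ℂ)) :
    ∃ n : ℕ,
      (∀ m, n ≤ m → (F₂ ∘ F₁)^[m] S = (F₂ ∘ F₁)^[n] S) ∧
      Submodule.map (flipL d) ((F₂ ∘ F₁)^[n] S) = (F₂ ∘ F₁)^[n] S ∧
      Submodule.map (flipL d) (Submodule.map (mapIX d) ((F₂ ∘ F₁)^[n] S)) =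
        Submodule.map (mapIX d) ((F₂ ∘ F₁)^[n] S) ∧
      Module.finrank ℂ ((F₂ ∘ F₁)^[n] S : Submodule ℂ ((Fin d × Fin d) → ℂ)) ≤
        4 * Module.finrank ℂ S := by
  refine ⟨1, fun m hm => iterate_eq_apply_of_one_le (F₂_F₁_F₂_F₁ S) hm, map_flipL_F₂_F₁ S, ?_,
    finrank_F₂_F₁_le S⟩
  have h := congrArg (Submodule.map (mapIX d)) (flipX_F₂_F₁ S)
  rwa [flipX, Submodule.map_map_eq_self mapIX_involutive] at h

end
end

section
/- Let {α_i ⊗ β_i}_{i=1}^{k₁} be a finite set of product vectors in ℂ^{a₁} ⊗ ℂ^{b₁} whose span's orthogonal complement contains no nonzero product vector, and let {γ_j ⊗ δ_j}_{j=1}^{k₂} be such a set in ℂ^{a₂} ⊗ ℂ^{b₂}. Then the set of product vectors {(α_i ⊗ γ_j) ⊗ (β_i ⊗ δ_j)}_{i,j} in (ℂ^{a₁} ⊗ ℂ^{a₂}) ⊗ (ℂ^{b₁} ⊗ ℂ^{b₂}) likewise spans a subspace whose orthogonal complement contains no nonzero product vector. -/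
open scoped ComplexConjugate

/-!
Choose `x` with `u x ≠ 0` and `y` with `v y ≠ 0`. The slices `u (·, x.2)` and `v (·, y.2)` are
nonzero, so the first UPB gives `i` with `⟨α i ⊗ β i, u (·, x.2) ⊗ v (·, y.2)⟩ ≠ 0`. This says
exactly that the partial inner products `innerFst (α i) u : ℂ^{a₂}` and `innerFst (β i) v : ℂ^{b₂}`
are nonzero at `x.2` and `y.2`, so the second UPB gives `j` with
`⟨γ j ⊗ δ j, innerFst (α i) u ⊗ innerFst (β i) v⟩ ≠ 0`, and this is the inner product of
`(α i ⊗ γ j) ⊗ (β i ⊗ δ j)` with `u ⊗ v`.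
-/

namespace ProductVector

open Matrix

variable {R : Type*} [CommSemiring R] [StarRing R]
  {X Y X' Y' : Type*} [Fintype X] [Fintype Y] [Fintype X'] [Fintype Y']

def kron (f : X → R) (g : Y → R) : X × Y → R := fun p => f p.1 * g p.2

def innerFst (f : X → R) (u : X × X' → R) : X' → R := fun x' => star f ⬝ᵥ fun x => u (x, x')

def IsUnextendible {ι : Type*} (α : ι → X → R) (β : ι → Y → R) : Prop :=
  ∀ u v, u ≠ 0 → v ≠ 0 → ∃ i, (star (α i) ⬝ᵥ u) * (star (β i) ⬝ᵥ v) ≠ 0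

theorem sum_sum_star_mul_mul (f u : X → R) (g v : Y → R) :
    ∑ x, ∑ y, star (f x * g y) * (u x * v y) = (star f ⬝ᵥ u) * (star g ⬝ᵥ v) := by
  simp only [dotProduct, Finset.sum_mul_sum, Pi.star_apply, star_mul']
  exact Finset.sum_congr rfl fun _ _ => Finset.sum_congr rfl fun _ _ => mul_mul_mul_comm ..

theorem star_kron_dotProduct (f : X → R) (g : X' → R) (u : X × X' → R) :
    star (kron f g) ⬝ᵥ u = star g ⬝ᵥ innerFst f u := by
  simp only [dotProduct, innerFst, kron, Fintype.sum_prod_type, Pi.star_apply, star_mul',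
    Finset.mul_sum]
  rw [Finset.sum_comm]
  exact Finset.sum_congr rfl fun _ _ => Finset.sum_congr rfl fun _ _ => by ring

theorem IsUnextendible.kron {ι κ : Type*} {α : ι → X → R} {β : ι → Y → R}
    {γ : κ → X' → R} {δ : κ → Y' → R}
    (h₁ : IsUnextendible α β) (h₂ : IsUnextendible γ δ) :
    IsUnextendible (fun p : ι × κ => kron (α p.1) (γ p.2)) (fun p => kron (β p.1) (δ p.2)) := by
  intro u v hu hv
  obtain ⟨x, hx⟩ := Function.ne_iff.mp hu
  obtain ⟨y, hy⟩ := Function.ne_iff.mp hv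
  have hu₁ : (fun a => u (a, x.2)) ≠ 0 := Function.ne_iff.mpr ⟨x.1, hx⟩
  have hv₁ : (fun b => v (b, y.2)) ≠ 0 := Function.ne_iff.mpr ⟨y.1, hy⟩
  obtain ⟨i, hi⟩ := h₁ _ _ hu₁ hv₁
  have hαu : innerFst (α i) u ≠ 0 :=
    Function.ne_iff.mpr ⟨x.2, left_ne_zero_of_mul hi⟩
  have hβv : innerFst (β i) v ≠ 0 :=
    Function.ne_iff.mpr ⟨y.2, right_ne_zero_of_mul hi⟩
  obtain ⟨j, hj⟩ := h₂ _ _ hαu hβv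
  exact ⟨(i, j), by simpa only [star_kron_dotProduct] using hj⟩

end ProductVector

open ProductVector in
/-- If `{α_i ⊗ β_i}` is a (not necessarily orthogonal) unextendible product basis in
`ℂ^{a₁} ⊗ ℂ^{b₁}` (no nonzero product vector is orthogonal to all of them), and
`{γ_j ⊗ δ_j}` is one in `ℂ^{a₂} ⊗ ℂ^{b₂}`, then `{(α_i ⊗ γ_j) ⊗ (β_i ⊗ δ_j)}` is an
unextendible product basis in `(ℂ^{a₁} ⊗ ℂ^{a₂}) ⊗ (ℂ^{b₁} ⊗ ℂ^{b₂})`. -/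
theorem tensor_of_UPB_is_UPB {a₁ b₁ a₂ b₂ k₁ k₂ : ℕ}
    (α : Fin k₁ → Fin a₁ → ℂ) (β : Fin k₁ → Fin b₁ → ℂ)
    (γ : Fin k₂ → Fin a₂ → ℂ) (δ : Fin k₂ → Fin b₂ → ℂ)
    (h₁ : ∀ (u : Fin a₁ → ℂ) (v : Fin b₁ → ℂ), u ≠ 0 → v ≠ 0 →
      ∃ i, (∑ x, ∑ y, conj (α i x * β i y) * (u x * v y)) ≠ 0)
    (h₂ : ∀ (u : Fin a₂ → ℂ) (v : Fin b₂ → ℂ), u ≠ 0 → v ≠ 0 →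
      ∃ j, (∑ x, ∑ y, conj (γ j x * δ j y) * (u x * v y)) ≠ 0) :
    ∀ (u : Fin a₁ × Fin a₂ → ℂ) (v : Fin b₁ × Fin b₂ → ℂ), u ≠ 0 → v ≠ 0 →
      ∃ i j, (∑ x : Fin a₁ × Fin a₂, ∑ y : Fin b₁ × Fin b₂,
        conj (α i x.1 * γ j x.2 * (β i y.1 * δ j y.2)) * (u x * v y)) ≠ 0 := by
  simp only [starRingEnd_apply, sum_sum_star_mul_mul] at h₁ h₂ ⊢
  intro u v hu hv
  obtain ⟨⟨i, j⟩, hij⟩ := IsUnextendible.kron h₁ h₂ u v hu hv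
  exact ⟨i, j, hij⟩
end

section
/- If a subspace S ⊆ H_A ⊗ H_B is spanned by an unextendible product basis, then S is strongly unextendible: for every k ≥ 1, the orthogonal complement of S^{⊗k} inside (H_A ⊗ H_B)^{⊗k} ≅ H_A^{⊗k} ⊗ H_B^{⊗k} contains no nonzero product vector with respect to the bipartition A^{⊗k} | B^{⊗k}. -/
open scoped ComplexConjugate

/-!
It suffices to take every `w i` to be a member of the UPB, so the theorem says that the `k`-th
tensor power of a UPB is a UPB for the bipartition `A^{⊗k} | B^{⊗k}`. This follows by induction
on `k` from the fact that the tensor product of two UPBs is a UPB.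
-/

section UPB

variable {ι ι' A A' B B' : Type*} [Fintype A] [Fintype A'] [Fintype B] [Fintype B']

/-- Unextendibility of the product vectors `α i ⊗ β i`, using that `u ⊗ v` is orthogonal to
`α i ⊗ β i` iff one of the two factors pairs to zero. -/
def IsUPB (α : ι → A → ℂ) (β : ι → B → ℂ) : Prop :=
  ∀ (u : A → ℂ) (v : B → ℂ), u ≠ 0 → v ≠ 0 → ∃ i, star (α i) ⬝ᵥ u ≠ 0 ∧ star (β i) ⬝ᵥ v ≠ 0

lemma sum_conj_mul_mul (x : A → ℂ) (y : B → ℂ) (u : A → ℂ) (v : B → ℂ) :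
    ∑ p : A × B, conj (x p.1 * y p.2) * (u p.1 * v p.2) = (star x ⬝ᵥ u) * (star y ⬝ᵥ v) := by
  simp only [dotProduct, Finset.sum_mul_sum, Fintype.sum_prod_type, map_mul, Pi.star_apply,
    Complex.star_def]
  exact Finset.sum_congr rfl fun _ _ => Finset.sum_congr rfl fun _ _ => by ring

lemma isUPB_iff (α : ι → A → ℂ) (β : ι → B → ℂ) :
    IsUPB α β ↔ ∀ (u : A → ℂ) (v : B → ℂ), u ≠ 0 → v ≠ 0 →
      ∃ i, ∑ p : A × B, conj (α i p.1 * β i p.2) * (u p.1 * v p.2) ≠ 0 := by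
  simp only [IsUPB, sum_conj_mul_mul, mul_ne_zero_iff]

lemma star_tensor_dotProduct (x : A → ℂ) (x' : A' → ℂ) (u : A × A' → ℂ) :
    star (fun p : A × A' => x p.1 * x' p.2) ⬝ᵥ u =
      star x' ⬝ᵥ fun a' => star x ⬝ᵥ fun a => u (a, a') := by
  simp only [dotProduct, Fintype.sum_prod_type, Finset.mul_sum, Pi.star_apply, star_mul']
  rw [Finset.sum_comm]
  exact Finset.sum_congr rfl fun _ _ => Finset.sum_congr rfl fun _ _ => by ring

omit [Fintype A] [Fintype A'] in
lemma exists_slice_ne_zero {u : A × A' → ℂ} (hu : u ≠ 0) : ∃ a', (fun a => u (a, a')) ≠ 0 := by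
  obtain ⟨p, hp⟩ := Function.ne_iff.mp hu
  exact ⟨p.2, Function.ne_iff.mpr ⟨p.1, hp⟩⟩

omit [Fintype A] [Fintype A'] in
lemma comp_equiv_ne_zero {u : A' → ℂ} (hu : u ≠ 0) (e : A ≃ A') : u ∘ e ≠ 0 := by
  simpa using e.surjective.injective_comp_right.ne hu

/-- The tensor product of two UPBs is a UPB: contracting `u ∈ A ⊗ A'` against a member of the
first UPB that detects a nonzero slice `u(·, a')` leaves a nonzero vector in `A'`, which the
second UPB then detects. -/
theorem IsUPB.tensor {α : ι → A → ℂ} {β : ι → B → ℂ} {α' : ι' → A' → ℂ} {β' : ι' → B' → ℂ}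
    (h : IsUPB α β) (h' : IsUPB α' β') :
    IsUPB (fun i : ι × ι' => fun p : A × A' => α i.1 p.1 * α' i.2 p.2)
      (fun i : ι × ι' => fun p : B × B' => β i.1 p.1 * β' i.2 p.2) := by
  intro u v hu hv
  obtain ⟨a', ha'⟩ := exists_slice_ne_zero hu
  obtain ⟨b', hb'⟩ := exists_slice_ne_zero hv
  obtain ⟨i, hui, hvi⟩ := h _ _ ha' hb'
  obtain ⟨i', hui', hvi'⟩ := h' (fun a' => star (α i) ⬝ᵥ fun a => u (a, a'))
    (fun b' => star (β i) ⬝ᵥ fun b => v (b, b'))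
    (Function.ne_iff.mpr ⟨a', hui⟩) (Function.ne_iff.mpr ⟨b', hvi⟩)
  exact ⟨(i, i'), by rwa [star_tensor_dotProduct], by rwa [star_tensor_dotProduct]⟩

theorem IsUPB.comp_equiv {α : ι → A → ℂ} {β : ι → B → ℂ} (h : IsUPB α β)
    (eι : ι' ≃ ι) (eA : A' ≃ A) (eB : B' ≃ B) :
    IsUPB (fun i => α (eι i) ∘ eA) (fun i => β (eι i) ∘ eB) := by
  intro u v hu hv
  obtain ⟨i, hui, hvi⟩ := h (u ∘ eA.symm) (v ∘ eB.symm) (comp_equiv_ne_zero hu _)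
    (comp_equiv_ne_zero hv _)
  refine ⟨eι.symm i, ?_, ?_⟩
  · rw [dotProduct_comp_equiv_symm] at hui
    simp only [eι.apply_symm_apply]
    exact hui
  · rw [dotProduct_comp_equiv_symm] at hvi
    simp only [eι.apply_symm_apply]
    exact hvi

def tensorPower (α : ι → A → ℂ) (k : ℕ) : (Fin k → ι) → (Fin k → A) → ℂ :=
  fun j g => ∏ i, α (j i) (g i)

omit [Fintype A] in
lemma tensorPower_succ (α : ι → A → ℂ) (k : ℕ) (j : Fin (k + 1) → ι) (g : Fin (k + 1) → A) :
    tensorPower α (k + 1) j g = α (j 0) (g 0) * tensorPower α k (Fin.tail j) (Fin.tail g) :=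
  Fin.prod_univ_succ _

theorem IsUPB.tensorPower {α : ι → A → ℂ} {β : ι → B → ℂ} (h : IsUPB α β) :
    ∀ k, IsUPB (tensorPower α k) (tensorPower β k)
  | 0 => fun u v hu hv => by
    refine ⟨isEmptyElim, ?_, ?_⟩
    · obtain ⟨g, hg⟩ := Function.ne_iff.mp hu
      simpa [_root_.tensorPower, dotProduct, Subsingleton.elim default g] using hg
    · obtain ⟨g, hg⟩ := Function.ne_iff.mp hv
      simpa [_root_.tensorPower, dotProduct, Subsingleton.elim default g] using hg
  | k + 1 => by
    have := (h.tensor (h.tensorPower k)).comp_equiv (Fin.consEquiv fun _ => ι).symm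
      (Fin.consEquiv fun _ => A).symm (Fin.consEquiv fun _ => B).symm
    convert this using 1 <;> ext j g <;> exact tensorPower_succ _ _ _ _

lemma sum_conj_prod_mul_mul (α : ι → A → ℂ) (β : ι → B → ℂ) {k : ℕ} (j : Fin k → ι)
    (u : (Fin k → A) → ℂ) (v : (Fin k → B) → ℂ) :
    ∑ f : Fin k → A × B, conj (∏ i, α (j i) (f i).1 * β (j i) (f i).2) *
        (u (fun i => (f i).1) * v (fun i => (f i).2)) =
      (star (tensorPower α k j) ⬝ᵥ u) * (star (tensorPower β k j) ⬝ᵥ v) := by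
  rw [← sum_conj_mul_mul, ← (Equiv.arrowProdEquivProdArrow _ _ _).symm.sum_comp]
  simp only [_root_.tensorPower, Finset.prod_mul_distrib]
  rfl

end UPB

/-- If a subspace `S ⊆ H_A ⊗ H_B` is spanned by an unextendible product basis (a set
of product vectors such that no nonzero product vector is orthogonal to all of them),
then `S` is strongly unextendible: for every `k ≥ 1`, the orthogonal complement of
`S^{⊗k}` contains no nonzero product vector with respect to the bipartition
`A^{⊗k} | B^{⊗k}`; that is, for every nonzero `u ∈ H_A^{⊗k}` and `v ∈ H_B^{⊗k}` there
is a `k`-fold tensor product of elements of `S` not orthogonal to `u ⊗ v`. -/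
theorem span_UPB_strongly_unextendible {a b m : ℕ}
    (α : Fin m → Fin a → ℂ) (β : Fin m → Fin b → ℂ)
    (hUPB : ∀ (u : Fin a → ℂ) (v : Fin b → ℂ), u ≠ 0 → v ≠ 0 →
      ∃ i, (∑ p : Fin a × Fin b, conj (α i p.1 * β i p.2) * (u p.1 * v p.2)) ≠ 0) :
    ∀ k : ℕ, 1 ≤ k →
      ∀ (u : (Fin k → Fin a) → ℂ) (v : (Fin k → Fin b) → ℂ), u ≠ 0 → v ≠ 0 →
        ∃ w : Fin k → (Fin a × Fin b → ℂ),
          (∀ i, w i ∈ Submodule.span ℂ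
            (Set.range fun i' : Fin m => fun p : Fin a × Fin b => α i' p.1 * β i' p.2)) ∧
          (∑ f : Fin k → Fin a × Fin b,
            conj (∏ i, w i (f i)) *
              (u (fun i => (f i).1) * v (fun i => (f i).2))) ≠ 0 := by
  intro k _ u v hu hv
  obtain ⟨j, hu', hv'⟩ := ((isUPB_iff α β).mpr hUPB).tensorPower k u v hu hv
  refine ⟨fun i p => α (j i) p.1 * β (j i) p.2, fun i => Submodule.subset_span ⟨j i, rfl⟩, ?_⟩
  rw [sum_conj_prod_mul_mul]
  exact mul_ne_zero hu' hv'
end
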